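/- Subtrajectory Fréchet monotonicity: for a trajectory T and indices a ≤ c ≤ d ≤ b, any discrete walk witnessing D_F(T[a,b], T[x,y]) ≤ Δ induces, for the restriction rows c through d, indices x ≤ x' ≤ y' ≤ y such that D_F(T[c,d], T[x',y']) ≤ Δ. In particular, if T[a,b] is within discrete Fréchet distance Δ of some subtrajectory S, then every subtrajectory T[c,d] of T[a,b] is within discrete Fréchet distance Δ of some subtrajectory of S. -/

import Mathlib

/-!
The infimum defining `dF` ranges over finitely many values, so it is attained by a walk `F`.
Along `F` the row index drops by at most one per step, so `F` passes through rows `c - a + 1`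
and `d - a + 1`; the piece of `F` between them, shifted down to end at `(1, 1)`, is a walk for
`T[c,d]` against a subtrajectory `T[x',y']` of `T[x,y]` whose cost is at most that of `F`.
-/

/-- One step of a discrete walk: each coordinate stays or decreases by one. -/
def Step (p q : ℕ × ℕ) : Prop :=
  (q.1 = p.1 ∨ q.1 + 1 = p.1) ∧ (q.2 = p.2 ∨ q.2 + 1 = p.2)

/-- A discrete walk from `(x, y)` down to `(1, 1)`. -/
def IsWalk (F : List (ℕ × ℕ)) (x y : ℕ) : Prop :=
  F.head? = some (x, y) ∧ F.getLast? = some (1, 1) ∧ List.Chain' Step F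

/-- The cost of a discrete walk: maximum pointwise distance along the walk. -/
noncomputable def walkCost (P Q : ℕ → ℝ × ℝ) (F : List (ℕ × ℕ)) : ℝ :=
  (F.map fun p => dist (P p.1) (Q p.2)).foldr max 0

/-- The discrete Fréchet distance between the sequences `P 1, …, P x` and `Q 1, …, Q y`. -/
noncomputable def dF (P : ℕ → ℝ × ℝ) (x : ℕ) (Q : ℕ → ℝ × ℝ) (y : ℕ) : ℝ :=
  sInf {c | ∃ F, IsWalk F x y ∧ walkCost P Q F = c}

/-- The subtrajectory of `T` starting at index `a`, reindexed from `1`. -/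
def subtraj (T : ℕ → ℝ × ℝ) (a : ℕ) : ℕ → ℝ × ℝ := fun i => T (a + i - 1)

open List

theorem List.foldr_max_mem_cons {α : Type*} [LinearOrder α] (b : α) (L : List α) :
    L.foldr max b ∈ b :: L := by
  induction L with
  | nil => simp
  | cons a t ih =>
    rcases max_choice a (t.foldr max b) with h | h <;>
      simp only [foldr_cons, h, mem_cons] at ih ⊢ <;> tauto

/-- Discrete intermediate value theorem along a chain on which `f` drops by at most one per step. -/
theorem List.IsChain.exists_mem_apply_eq {α : Type*} {R : α → α → Prop} {f : α → ℕ}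
    (hR : ∀ a b, R a b → f a ≤ f b + 1) {l : List α} (hl : l.IsChain R) {a z : α}
    (ha : l.head? = some a) (hz : l.getLast? = some z) {k : ℕ} (hzk : f z ≤ k) (hka : k ≤ f a) :
    ∃ b ∈ l, f b = k := by
  induction l generalizing a with
  | nil => simp at ha
  | cons a' t ih =>
    obtain rfl : a = a' := by simpa using ha.symm
    rcases hka.eq_or_lt with hak | hak
    · exact ⟨a, mem_cons_self, hak.symm⟩
    cases t with
    | nil => simp only [getLast?_singleton, Option.some.injEq] at hz; subst hz; omega
    | cons b t =>
      obtain ⟨hab, hbt⟩ := isChain_cons_cons.mp hl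
      obtain ⟨c, hc, hck⟩ := ih hbt rfl (by simpa using hz) (by have := hR a b hab; omega)
      exact ⟨c, mem_cons_of_mem a hc, hck⟩

namespace Step

variable {p q : ℕ × ℕ}

theorem le (h : Step p q) : q ≤ p := by
  obtain ⟨h₁, h₂⟩ := h
  exact Prod.mk_le_mk.mpr ⟨by omega, by omega⟩

theorem fst_le_succ (h : Step p q) : p.1 ≤ q.1 + 1 := by
  obtain ⟨h₁, -⟩ := h
  omega

theorem sub (h : Step p q) {o : ℕ × ℕ} (hoq : o ≤ q) : Step (p - o) (q - o) := by
  obtain ⟨h₁, h₂⟩ := h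
  obtain ⟨ho₁, ho₂⟩ := hoq
  simp only [Step, Prod.fst_sub, Prod.snd_sub]
  exact ⟨by omega, by omega⟩

end Step

def IsWalkFromTo (F : List (ℕ × ℕ)) (s t : ℕ × ℕ) : Prop :=
  F.head? = some s ∧ F.getLast? = some t ∧ F.IsChain Step

theorem isWalk_iff_isWalkFromTo {F : List (ℕ × ℕ)} {x y : ℕ} :
    IsWalk F x y ↔ IsWalkFromTo F (x, y) (1, 1) :=
  Iff.rfl

namespace IsWalkFromTo

variable {F : List (ℕ × ℕ)} {s t : ℕ × ℕ}

theorem singleton (s : ℕ × ℕ) : IsWalkFromTo [s] s s :=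
  ⟨rfl, rfl, isChain_singleton s⟩

theorem cons (hF : IsWalkFromTo F s t) {r : ℕ × ℕ} (hr : Step r s) :
    IsWalkFromTo (r :: F) r t := by
  obtain ⟨hs, ht, hc⟩ := hF
  obtain ⟨F', rfl⟩ := head?_eq_some_iff.mp hs
  exact ⟨rfl, by simpa using ht, hc.cons (by simpa using hr)⟩

theorem mem_Icc (hF : IsWalkFromTo F s t) {p : ℕ × ℕ} (hp : p ∈ F) : p ∈ Set.Icc t s := by
  obtain ⟨hs, ht, hc⟩ := hF
  refine ⟨hc.backwards_induction (t ≤ ·) F (fun _ _ h h' => h'.trans h.le) ?_ p hp,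
    hc.induction (· ≤ s) F (fun _ _ h h' => h.le.trans h') ?_ p hp⟩
  · exact fun hne => (Option.some.inj ((getLast?_eq_some_getLast hne).symm.trans ht)).ge
  · exact fun hne => (Option.some.inj ((head?_eq_some_head hne).symm.trans hs)).le

theorem head_mem (hF : IsWalkFromTo F s t) : s ∈ F :=
  mem_of_mem_head? hF.1

theorem getLast_mem (hF : IsWalkFromTo F s t) : t ∈ F :=
  mem_of_getLast? hF.2.1

theorem map_sub (hF : IsWalkFromTo F s t) {o : ℕ × ℕ} (ho : o ≤ t) :
    IsWalkFromTo (F.map (· - o)) (s - o) (t - o) := by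
  refine ⟨by simp [hF.1], by simp [hF.2.1], (isChain_map _).mpr ?_⟩
  exact hF.2.2.imp_of_mem_imp fun _ q _ hq h => h.sub (ho.trans (hF.mem_Icc hq).1)

theorem split {l₁ l₂ : List (ℕ × ℕ)} {b : ℕ × ℕ} (hF : IsWalkFromTo (l₁ ++ b :: l₂) s t) :
    IsWalkFromTo (l₁ ++ [b]) s b ∧ IsWalkFromTo (b :: l₂) b t := by
  obtain ⟨hs, ht, hc⟩ := hF
  obtain ⟨hc₁, hc₂⟩ := isChain_split.mp hc
  refine ⟨⟨?_, by simp, hc₁⟩, ⟨rfl, ?_, hc₂⟩⟩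
  · cases l₁ <;> simpa using hs
  · simpa [getLast?_append] using ht

theorem exists_infix (hF : IsWalkFromTo F s t) {k₁ k₂ : ℕ} (h₁ : t.1 ≤ k₁) (h₁₂ : k₁ ≤ k₂)
    (h₂ : k₂ ≤ s.1) : ∃ G u v, G <:+: F ∧ IsWalkFromTo G u v ∧ u.1 = k₂ ∧ v.1 = k₁ := by
  have hR : ∀ p q, Step p q → p.1 ≤ q.1 + 1 := fun _ _ => Step.fst_le_succ
  obtain ⟨b, hbF, hb⟩ := hF.2.2.exists_mem_apply_eq hR hF.1 hF.2.1 (h₁.trans h₁₂) h₂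
  obtain ⟨l₁, l₂, rfl⟩ := append_of_mem hbF
  have hbt := hF.split.2
  obtain ⟨b', hb'F, hb'⟩ := hbt.2.2.exists_mem_apply_eq hR hbt.1 hbt.2.1 h₁ (hb ▸ h₁₂)
  obtain ⟨m₁, m₂, hm⟩ := append_of_mem hb'F
  rw [hm] at hbt
  refine ⟨m₁ ++ [b'], b, b', ?_, hbt.split.1, hb, hb'⟩
  have hpre : m₁ ++ [b'] <+: b :: l₂ := hm ▸ ⟨m₂, by simp⟩
  exact hpre.isInfix.trans (suffix_append l₁ (b :: l₂)).isInfix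

end IsWalkFromTo

theorem exists_isWalk {p q : ℕ} (hp : 1 ≤ p) (hq : 1 ≤ q) : ∃ F, IsWalk F p q := by
  obtain ⟨m, rfl⟩ : ∃ m, p = m + 1 := ⟨p - 1, by omega⟩
  obtain ⟨n, rfl⟩ : ∃ n, q = n + 1 := ⟨q - 1, by omega⟩
  simp only [isWalk_iff_isWalkFromTo]
  induction m with
  | zero =>
    induction n with
    | zero => exact ⟨_, .singleton _⟩
    | succ n ih =>
      obtain ⟨F, hF⟩ := ih (by omega)
      exact ⟨_, hF.cons ⟨Or.inl rfl, Or.inr rfl⟩⟩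
  | succ m ih =>
    obtain ⟨F, hF⟩ := ih (by omega)
    exact ⟨_, hF.cons ⟨Or.inr rfl, Or.inl rfl⟩⟩

section Cost

variable (P Q : ℕ → ℝ × ℝ)

theorem walkCost_le_iff {F : List (ℕ × ℕ)} {Δ : ℝ} :
    walkCost P Q F ≤ Δ ↔ 0 ≤ Δ ∧ ∀ p ∈ F, dist (P p.1) (Q p.2) ≤ Δ := by
  induction F with
  | nil => simp [walkCost]
  | cons p F ih =>
    simp only [walkCost, map_cons, foldr_cons, max_le_iff, forall_mem_cons] at ih ⊢
    rw [ih]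
    tauto

theorem walkCost_nonneg (F : List (ℕ × ℕ)) : 0 ≤ walkCost P Q F :=
  ((walkCost_le_iff P Q).mp le_rfl).1

theorem walkCost_mem (F : List (ℕ × ℕ)) :
    walkCost P Q F ∈ 0 :: F.map fun p => dist (P p.1) (Q p.2) :=
  foldr_max_mem_cons _ _

theorem dF_le_walkCost {F : List (ℕ × ℕ)} {p q : ℕ} (hF : IsWalk F p q) :
    dF P p Q q ≤ walkCost P Q F :=
  csInf_le ⟨0, by rintro _ ⟨G, -, rfl⟩; exact walkCost_nonneg P Q G⟩ ⟨F, hF, rfl⟩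

theorem finite_walkCosts (p q : ℕ) : {c | ∃ F, IsWalk F p q ∧ walkCost P Q F = c}.Finite := by
  refine (insert 0 ((Finset.Icc (1, 1) (p, q)).image fun r : ℕ × ℕ => dist (P r.1) (Q r.2))
    |>.finite_toSet).subset ?_
  rintro _ ⟨F, hF, rfl⟩
  rcases mem_cons.mp (walkCost_mem P Q F) with h | h
  · simp [h]
  · obtain ⟨r, hr, hc⟩ := mem_map.mp h
    simp only [Finset.coe_insert, Finset.coe_image, Set.mem_insert_iff, Set.mem_image,
      Finset.mem_coe, Finset.mem_Icc]
    exact Or.inr ⟨r, (isWalk_iff_isWalkFromTo.mp hF).mem_Icc hr, hc⟩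

theorem exists_isWalk_walkCost_eq_dF {p q : ℕ} (hp : 1 ≤ p) (hq : 1 ≤ q) :
    ∃ F, IsWalk F p q ∧ walkCost P Q F = dF P p Q q := by
  obtain ⟨F, hF⟩ := exists_isWalk hp hq
  have hne : {c | ∃ F, IsWalk F p q ∧ walkCost P Q F = c}.Nonempty := ⟨_, F, hF, rfl⟩
  exact hne.csInf_mem (finite_walkCosts P Q p q)

end Cost

theorem subtraj_add_apply_sub (T : ℕ → ℝ × ℝ) {a k i : ℕ} (hki : k < i) :
    subtraj T (a + k) (i - k) = subtraj T a i := by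
  simp only [subtraj]
  congr 1
  omega

theorem subtraj_frechet_mono_general (T : ℕ → ℝ × ℝ) (Δ : ℝ)
    (a b c d x y : ℕ) (hac : a ≤ c) (hcd : c ≤ d) (hdb : d ≤ b)
    (hxy : x ≤ y)
    (h : dF (subtraj T a) (b - a + 1) (subtraj T x) (y - x + 1) ≤ Δ) :
    ∃ x' y', x ≤ x' ∧ x' ≤ y' ∧ y' ≤ y ∧
      dF (subtraj T c) (d - c + 1) (subtraj T x') (y' - x' + 1) ≤ Δ := by
  obtain ⟨k, rfl⟩ := Nat.exists_eq_add_of_le hac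
  obtain ⟨F, hF, hFcost⟩ := exists_isWalk_walkCost_eq_dF (subtraj T a) (subtraj T x)
    (p := b - a + 1) (q := y - x + 1) (by omega) (by omega)
  obtain ⟨hΔ, hFΔ⟩ := (walkCost_le_iff _ _).mp (hFcost ▸ h)
  rw [isWalk_iff_isWalkFromTo] at hF
  obtain ⟨G, u, v, hGF, hG, hu, hv⟩ :=
    hF.exists_infix (k₁ := k + 1) (k₂ := d - a + 1) (by omega) (by omega) (by omega)
  obtain ⟨⟨-, hv₂⟩, -⟩ := hF.mem_Icc (hGF.subset hG.getLast_mem)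
  obtain ⟨-, -, hu₂⟩ := hF.mem_Icc (hGF.subset hG.head_mem)
  obtain ⟨-, hvu₂⟩ := (hG.mem_Icc hG.head_mem).1
  refine ⟨x + (v.2 - 1), x + (u.2 - 1), by omega, by omega, by omega, ?_⟩
  have ho : (k, v.2 - 1) ≤ v := Prod.mk_le_mk.mpr ⟨by omega, by omega⟩
  have hwalk : IsWalk (G.map (· - (k, v.2 - 1))) (d - (a + k) + 1)
      (x + (u.2 - 1) - (x + (v.2 - 1)) + 1) := by
    rw [isWalk_iff_isWalkFromTo]
    convert hG.map_sub ho using 1 <;> ext <;> simp only [Prod.fst_sub, Prod.snd_sub] <;> omega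
  refine (dF_le_walkCost _ _ hwalk).trans ((walkCost_le_iff _ _).mpr ⟨hΔ, ?_⟩)
  simp only [forall_mem_map, Prod.fst_sub, Prod.snd_sub]
  intro r hr
  obtain ⟨hvr₁, hvr₂⟩ := (hG.mem_Icc hr).1
  rw [subtraj_add_apply_sub T (by omega), subtraj_add_apply_sub T (by omega)]
  exact hFΔ r (hGF.subset hr)

/-- subtrajectory Fréchet monotonicity: if T[a,b] is within discrete
Fréchet distance Δ of T[x,y], then every subtrajectory T[c,d] of T[a,b] is within
distance Δ of some subtrajectory T[x',y'] of T[x,y]. -/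
theorem subtraj_frechet_mono (T : ℕ → ℝ × ℝ) (Δ : ℝ)
    (a b c d x y : ℕ) (ha : 1 ≤ a) (hac : a ≤ c) (hcd : c ≤ d) (hdb : d ≤ b)
    (hx : 1 ≤ x) (hxy : x ≤ y)
    (h : dF (subtraj T a) (b - a + 1) (subtraj T x) (y - x + 1) ≤ Δ) :
    ∃ x' y', x ≤ x' ∧ x' ≤ y' ∧ y' ≤ y ∧
      dF (subtraj T c) (d - c + 1) (subtraj T x') (y' - x' + 1) ≤ Δ :=
  subtraj_frechet_mono_general T Δ a b c d x y hac hcd hdb hxy h
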